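/- arXiv:1507.04208 — 2 statements merged into one kernel-verified Lean document; each statement's English description precedes it below -/
import Mathlib

section
/- Let Δ_1 ≥ Δ_2 ≥ ... ≥ Δ_N > 0 be real numbers. Then Δ_1 / Δ_1² + Σ_{k=2}^N Δ_k (1/Δ_k² − 1/Δ_{k−1}²) < 2 / Δ_N. -/
lemma stmt_6_aux (Δ : ℕ → ℝ) :
    ∀ N, 1 ≤ N → (∀ k < N, 0 < Δ k) → (∀ j k, j ≤ k → k < N → Δ k ≤ Δ j) →
      Δ 0 / (Δ 0) ^ 2 +
          ∑ k ∈ Finset.Ico 1 N, Δ k * (1 / (Δ k) ^ 2 - 1 / (Δ (k - 1)) ^ 2) ≤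
        2 / Δ (N - 1) - 1 / Δ 0 := by
  intro N hN
  induction N, hN using Nat.le_induction with
  | base =>
    intro hpos _
    simp only [Finset.Ico_self, Finset.sum_empty, add_zero]
    have h0 : 0 < Δ 0 := hpos 0 (by norm_num)
    have : Δ 0 / Δ 0 ^ 2 = 1 / Δ 0 := by field_simp
    rw [this]; ring_nf; exact le_refl _
  | succ n hn ih =>
    intro hpos hmono
    have hps : ∀ k < n, 0 < Δ k := fun k hk => hpos k (by omega)
    have hms : ∀ j k, j ≤ k → k < n → Δ k ≤ Δ j := fun j k hjk hk => hmono j k hjk (by omega)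
    have hIH := ih hps hms
    rw [Finset.sum_Ico_succ_top (by omega)]
    have hn1 : 0 < Δ (n - 1) := hpos (n - 1) (by omega)
    have hn2 : 0 < Δ n := hpos n (by omega)
    have hle : Δ n ≤ Δ (n - 1) := hmono (n - 1) n (by omega) (by omega)
    have hkey : Δ n * (1 / (Δ n) ^ 2 - 1 / (Δ (n - 1)) ^ 2) ≤ 2 / Δ n - 2 / Δ (n - 1) := by
      have e1 : Δ n * (1 / (Δ n) ^ 2 - 1 / (Δ (n - 1)) ^ 2) - (2 / Δ n - 2 / Δ (n - 1))
          = -((Δ (n - 1) - Δ n) ^ 2 / (Δ n * Δ (n - 1) ^ 2)) := by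
        field_simp
        ring
      have hnn : 0 ≤ (Δ (n - 1) - Δ n) ^ 2 / (Δ n * Δ (n - 1) ^ 2) := by positivity
      linarith
    have : (n + 1 : ℕ) - 1 = n := by omega
    rw [this]
    calc Δ 0 / Δ 0 ^ 2 + (∑ k ∈ Finset.Ico 1 n, Δ k * (1 / Δ k ^ 2 - 1 / Δ (k - 1) ^ 2)
          + Δ n * (1 / (Δ n) ^ 2 - 1 / (Δ (n - 1)) ^ 2))
        ≤ (2 / Δ (n - 1) - 1 / Δ 0) + (2 / Δ n - 2 / Δ (n - 1)) := by
          linarith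
      _ = 2 / Δ n - 1 / Δ 0 := by ring

theorem stmt_6 (N : ℕ) (hN : 0 < N) (Δ : ℕ → ℝ)
    (hpos : ∀ k < N, 0 < Δ k)
    (hmono : ∀ j k, j ≤ k → k < N → Δ k ≤ Δ j) :
    Δ 0 / (Δ 0) ^ 2 +
        ∑ k ∈ Finset.Ico 1 N, Δ k * (1 / (Δ k) ^ 2 - 1 / (Δ (k - 1)) ^ 2) <
      2 / Δ (N - 1) := by
  have h := stmt_6_aux Δ N hN hpos hmono
  have h0 : 0 < Δ 0 := hpos 0 hN
  have : 0 < 1 / Δ 0 := by positivity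
  linarith
end

section
/- Let x, y : Fin m → ℝ with 0 ≤ x k, y k ≤ 1 for all k, and let u : Fin m → ℝ with u k ≥ 0 for all k. If ∏_k min(x k + u k, 1) ≥ ∏_k y k, then ∏_k x k + Σ_k u k ≥ ∏_k y k. -/
lemma aux_prod_le {ι : Type*} [DecidableEq ι] (s : Finset ι) (f g : ι → ℝ)
    (h1 : ∀ k ∈ s, 0 ≤ g k) (h2 : ∀ k ∈ s, g k ≤ f k) (h3 : ∀ k ∈ s, f k ≤ 1) :
    ∏ k ∈ s, f k ≤ ∏ k ∈ s, g k + ∑ k ∈ s, (f k - g k) := by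
  induction s using Finset.induction_on with
  | empty => simp
  | @insert a s ha ih =>
    simp only [Finset.prod_insert ha, Finset.sum_insert ha]
    have h1' := fun k hk => h1 k (Finset.mem_insert_of_mem hk)
    have h2' := fun k hk => h2 k (Finset.mem_insert_of_mem hk)
    have h3' := fun k hk => h3 k (Finset.mem_insert_of_mem hk)
    have ih' := ih h1' h2' h3'
    have hga : 0 ≤ g a := h1 a (Finset.mem_insert_self a s)
    have hfa : g a ≤ f a := h2 a (Finset.mem_insert_self a s)
    have hfa1 : f a ≤ 1 := h3 a (Finset.mem_insert_self a s)
    have hgprod0 : 0 ≤ ∏ k ∈ s, g k := Finset.prod_nonneg h1'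
    have hgprod1 : ∏ k ∈ s, g k ≤ 1 :=
      Finset.prod_le_one h1' (fun k hk => (h2' k hk).trans (h3' k hk))
    have hsum0 : 0 ≤ ∑ k ∈ s, (f k - g k) :=
      Finset.sum_nonneg (fun k hk => by linarith [h2' k hk])
    have hfa0 : 0 ≤ f a := hga.trans hfa
    calc f a * ∏ k ∈ s, f k ≤ f a * (∏ k ∈ s, g k + ∑ k ∈ s, (f k - g k)) :=
          mul_le_mul_of_nonneg_left ih' hfa0
      _ = f a * ∏ k ∈ s, g k + f a * ∑ k ∈ s, (f k - g k) := by ring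
      _ ≤ f a * ∏ k ∈ s, g k + ∑ k ∈ s, (f k - g k) := by nlinarith
      _ ≤ g a * ∏ k ∈ s, g k + ((f a - g a) + ∑ k ∈ s, (f k - g k)) := by nlinarith
      _ = g a * ∏ k ∈ s, g k + (f a - g a + ∑ k ∈ s, (f k - g k)) := by ring

theorem stmt_13 (m : ℕ) (x y u : Fin m → ℝ)
    (hx : ∀ k, 0 ≤ x k ∧ x k ≤ 1) (hy : ∀ k, 0 ≤ y k ∧ y k ≤ 1)
    (hu : ∀ k, 0 ≤ u k)
    (h : ∏ k, min (x k + u k) 1 ≥ ∏ k, y k) :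
    ∏ k, x k + ∑ k, u k ≥ ∏ k, y k := by
  have key := aux_prod_le Finset.univ (fun k => min (x k + u k) 1) x
    (fun k _ => (hx k).1)
    (fun k _ => le_min (by linarith [hu k]) (hx k).2)
    (fun k _ => min_le_right _ _)
  have hsum : ∑ k, (min (x k + u k) 1 - x k) ≤ ∑ k, u k :=
    Finset.sum_le_sum (fun k _ => by
      have := min_le_left (x k + u k) 1; linarith)
  calc ∏ k, y k ≤ ∏ k, min (x k + u k) 1 := h
    _ ≤ ∏ k, x k + ∑ k, (min (x k + u k) 1 - x k) := key
    _ ≤ ∏ k, x k + ∑ k, u k := by linarith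
end
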